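/- Dominant-response condition for volume targeting: fix T with 0 < T ≤ min (θ̲₁ · T_max) (θ̲₂ · T_max) and a type θ₁ ∈ [θ̲₁, θ̄₁]. If σ₁(θ₁) ≤ m_A(σ₂(θ₂)) for every θ₂ ∈ [θ̲₂, θ̄₂], then for every θ₂ ∈ [θ̲₂, θ̄₂], σ₁(θ₁) maximizes x ↦ π_mm(x, σ₂(θ₂); θ₁, θ₂) over [0, σ₂(θ₂)]. Symmetrically, for a type θ₂ ∈ [θ̲₂, θ̄₂], if σ₂(θ₂) ≥ s_A(σ₁(θ₁)) for every θ₁ ∈ [θ̲₁, θ̄₁], then for every θ₁ ∈ [θ̲₁, θ̄₁], σ₂(θ₂) maximizes y ↦ π_rm(σ₁(θ₁), y; θ₁, θ₂) over [σ₁(θ₁), r_b]. -/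

import Mathlib

open Set

/-- Type-dependent interdealer trade quantity. -/
noncomputable def interQt (D S : ℝ → ℝ) (θ1 θ2 x y : ℝ) : ℝ :=
  min (θ1 * D x) (θ2 * S y)

/-- Type-dependent payoff of `BD_mm`. -/
noncomputable def piMMt (D S : ℝ → ℝ) (θ1 θ2 x y : ℝ) : ℝ :=
  (1 / 2) * max (y - x) 0 * interQt D S θ1 θ2 x y -
    max (θ1 * D x - interQt D S θ1 θ2 x y) 0 * x

/-- Type-dependent payoff of `BD_rm`. -/
noncomputable def piRMt (D S : ℝ → ℝ) (θ1 θ2 x y : ℝ) : ℝ :=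
  (1 / 2) * max (y - x) 0 * interQt D S θ1 θ2 x y -
    max (θ2 * S y - interQt D S θ1 θ2 x y) 0 * y

/-!
At the targeting profile both sides offer `T`, so each dealer earns `(y - x) T / 2`. Moving
towards the counterparty's rate narrows the spread while the traded quantity stays capped at `T`,
so it does not pay. Moving away lowers the quantity to `θ₁ D x` (resp. `θ₂ S y`), and the payoff
becomes a positive multiple of the concave function `(y - r) D r` (resp. `(r - x) S r`). The
targeted rate lies between the deviation and the peak `m_A` (resp. `s_A`) of that function, so
by concavity this deviation does not pay either.
-/

theorem ConcaveOn.le_of_mem_segment_of_isMaxOn {𝕜 E β : Type*} [Semiring 𝕜] [PartialOrder 𝕜]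
    [AddCommMonoid E] [SMul 𝕜 E] [AddCommMonoid β] [LinearOrder β] [IsOrderedAddMonoid β]
    [Module 𝕜 β] [PosSMulStrictMono 𝕜 β] {s : Set E} {f : E → β} (hf : ConcaveOn 𝕜 s f)
    {a b m : E} (ha : a ∈ s) (hm : m ∈ s) (hmax : IsMaxOn f s m) (hb : b ∈ segment 𝕜 a m) :
    f a ≤ f b :=
  (min_eq_left (hmax ha)).ge.trans (hf.ge_on_segment ha hm hb)

theorem concaveOn_affine_mul {f : ℝ → ℝ} {U s : Set ℝ} (hU : IsOpen U) (hf : ContDiffOn ℝ 2 f U)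
    (hs : Convex ℝ s) (hsU : s ⊆ U) {α β : ℝ} (hℓ : ∀ r ∈ s, 0 ≤ α * r + β)
    (hf' : ∀ r ∈ s, α * deriv f r ≤ 0) (hf'' : ∀ r ∈ s, deriv (deriv f) r ≤ 0) :
    ConcaveOn ℝ s (fun r => (α * r + β) * f r) := by
  have hdf : DifferentiableOn ℝ f U := hf.differentiableOn (by norm_num)
  have hddf : DifferentiableOn ℝ (deriv f) U :=
    (hf.deriv_of_isOpen hU (m := 1) (by norm_num)).differentiableOn (by norm_num)
  have hderiv {r : ℝ} (hr : r ∈ interior s) :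
      HasDerivAt f (deriv f r) r ∧ HasDerivAt (deriv f) (deriv (deriv f) r) r := by
    have hrU : U ∈ nhds r := hU.mem_nhds (hsU (interior_subset hr))
    exact ⟨(hdf.differentiableAt hrU).hasDerivAt, (hddf.differentiableAt hrU).hasDerivAt⟩
  have hℓ' (r : ℝ) : HasDerivAt (fun r => α * r + β) α r := by
    simpa using ((hasDerivAt_id r).const_mul α).add_const β
  refine concaveOn_of_hasDerivWithinAt2_nonpos hs
    (f' := fun r => (α * r + β) * deriv f r + α * f r)
    (f'' := fun r => (α * r + β) * deriv (deriv f) r + 2 * (α * deriv f r))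
    ((continuous_const.mul continuous_id |>.add continuous_const).continuousOn.mul
      (hdf.continuousOn.mono hsU)) (fun r hr => ?_) (fun r hr => ?_) (fun r hr => ?_)
  · exact ((hℓ' r).mul (hderiv hr).1).hasDerivWithinAt.congr_deriv (by ring)
  · exact (((hℓ' r).mul (hderiv hr).2).add ((hderiv hr).1.const_mul α)).hasDerivWithinAt
      |>.congr_deriv (by ring)
  · have hr' := interior_subset hr
    nlinarith [hℓ r hr', hf' r hr', hf'' r hr']

section Payoffs

variable {D S : ℝ → ℝ} {θ1 θ2 T : ℝ}

theorem piMMt_le_half_mul_interQt {x y : ℝ} (hx : 0 ≤ x) :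
    piMMt D S θ1 θ2 x y ≤ (1 / 2) * max (y - x) 0 * interQt D S θ1 θ2 x y :=
  sub_le_self _ (mul_nonneg (le_max_right _ _) hx)

theorem piRMt_le_half_mul_interQt {x y : ℝ} (hy : 0 ≤ y) :
    piRMt D S θ1 θ2 x y ≤ (1 / 2) * max (y - x) 0 * interQt D S θ1 θ2 x y :=
  sub_le_self _ (mul_nonneg (le_max_right _ _) hy)

theorem interQt_of_targeting {x y : ℝ} (hx : θ1 * D x = T) (hy : θ2 * S y = T) :
    interQt D S θ1 θ2 x y = T := by
  rw [interQt, hx, hy, min_self]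

theorem piMMt_of_targeting {x y : ℝ} (hx : θ1 * D x = T) (hy : θ2 * S y = T) (hxy : x ≤ y) :
    piMMt D S θ1 θ2 x y = (1 / 2) * (y - x) * T := by
  rw [piMMt, interQt_of_targeting hx hy, hx, sub_self, max_self, zero_mul, sub_zero,
    max_eq_left (sub_nonneg.2 hxy)]

theorem piRMt_of_targeting {x y : ℝ} (hx : θ1 * D x = T) (hy : θ2 * S y = T) (hxy : x ≤ y) :
    piRMt D S θ1 θ2 x y = (1 / 2) * (y - x) * T := by
  rw [piRMt, interQt_of_targeting hx hy, hy, sub_self, max_self, zero_mul, sub_zero,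
    max_eq_left (sub_nonneg.2 hxy)]

theorem piMMt_le_piMMt_of_targeting {x₁ y m x : ℝ} (hθ1 : 0 < θ1)
    (hT : 0 ≤ T) (hx₁ : θ1 * D x₁ = T) (hy : θ2 * S y = T) (hD : MonotoneOn D (Icc 0 y))
    (hconc : ConcaveOn ℝ (Icc 0 y) (fun r => (y - r) * D r)) (hm : m ∈ Icc 0 y)
    (hmax : IsMaxOn (fun r => (y - r) * D r) (Icc 0 y) m) (hx₁m : x₁ ≤ m) (hx : x ∈ Icc 0 y) :
    piMMt D S θ1 θ2 x y ≤ piMMt D S θ1 θ2 x₁ y := by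
  have hx₁y : x₁ ≤ y := hx₁m.trans hm.2
  rw [piMMt_of_targeting hx₁ hy hx₁y]
  refine (piMMt_le_half_mul_interQt hx.1).trans ?_
  rw [max_eq_left (sub_nonneg.2 hx.2), interQt, hy]
  rcases le_or_gt x x₁ with hle | hlt
  · have hDx : θ1 * D x ≤ T :=
      hx₁ ▸ mul_le_mul_of_nonneg_left (hD hx ⟨hx.1.trans hle, hx₁y⟩ hle) hθ1.le
    have hgain : (y - x) * D x ≤ (y - x₁) * D x₁ :=
      hconc.le_of_mem_segment_of_isMaxOn hx hm hmax <| by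
        rw [segment_eq_Icc (hle.trans hx₁m)]
        exact ⟨hle, hx₁m⟩
    rw [min_eq_left hDx, ← hx₁]
    nlinarith [mul_le_mul_of_nonneg_left hgain hθ1.le]
  · calc 1 / 2 * (y - x) * min (θ1 * D x) T ≤ 1 / 2 * (y - x) * T := by
          gcongr
          · linarith [hx.2]
          · exact min_le_right _ _
      _ ≤ 1 / 2 * (y - x₁) * T := by gcongr

theorem piRMt_le_piRMt_of_targeting {x y₁ b m y : ℝ} (hθ2 : 0 < θ2)
    (hT : 0 ≤ T) (hx : θ1 * D x = T) (hy₁ : θ2 * S y₁ = T) (hx0 : 0 ≤ x)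
    (hS : AntitoneOn S (Icc x b)) (hconc : ConcaveOn ℝ (Icc x b) (fun r => (r - x) * S r))
    (hm : m ∈ Icc x b) (hmax : IsMaxOn (fun r => (r - x) * S r) (Icc x b) m) (hmy₁ : m ≤ y₁)
    (hy : y ∈ Icc x b) :
    piRMt D S θ1 θ2 x y ≤ piRMt D S θ1 θ2 x y₁ := by
  have hxy₁ : x ≤ y₁ := hm.1.trans hmy₁
  rw [piRMt_of_targeting hx hy₁ hxy₁]
  refine (piRMt_le_half_mul_interQt (hx0.trans hy.1)).trans ?_
  rw [max_eq_left (sub_nonneg.2 hy.1), interQt, hx]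
  rcases le_or_gt y₁ y with hle | hlt
  · have hSy : θ2 * S y ≤ T :=
      hy₁ ▸ mul_le_mul_of_nonneg_left (hS ⟨hxy₁, hle.trans hy.2⟩ hy hle) hθ2.le
    have hgain : (y - x) * S y ≤ (y₁ - x) * S y₁ := by
      refine hconc.le_of_mem_segment_of_isMaxOn hy hm hmax ?_
      rw [segment_symm, segment_eq_Icc (hmy₁.trans hle)]
      exact ⟨hmy₁, hle⟩
    rw [min_eq_right hSy, ← hy₁]
    nlinarith [mul_le_mul_of_nonneg_left hgain hθ2.le]
  · calc 1 / 2 * (y - x) * min T (θ2 * S y) ≤ 1 / 2 * (y - x) * T := by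
          gcongr
          · linarith [hy.1]
          · exact min_le_left _ _
      _ ≤ 1 / 2 * (y₁ - x) * T := by gcongr

end Payoffs

theorem dominant_response_volume_targeting_general
    (rhat rb : ℝ) (D S mA sA : ℝ → ℝ)
    (hrhat : 0 < rhat) (hrb : rhat < rb)
    (hDm : StrictMonoOn D (Icc 0 rb))
    (hSa : StrictAntiOn S (Icc 0 rb))
    (U : Set ℝ) (hUo : IsOpen U) (hU : Icc (0:ℝ) rb ⊆ U)
    (hD2 : ContDiffOn ℝ 2 D U) (hS2 : ContDiffOn ℝ 2 S U)
    (hD' : ∀ x ∈ Icc (0:ℝ) rb, 0 < deriv D x)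
    (hD'' : ∀ x ∈ Icc (0:ℝ) rb, deriv (deriv D) x < 0)
    (hS' : ∀ x ∈ Icc (0:ℝ) rb, deriv S x < 0)
    (hS'' : ∀ x ∈ Icc (0:ℝ) rb, deriv (deriv S) x < 0)
    (θl1 θu1 θl2 θu2 : ℝ)
    (hθ1 : 0 < θl1) (hθ2 : 0 < θl2)
    (T : ℝ) (hT0 : 0 < T)
    (σ1 σ2 : ℝ → ℝ)
    (hσ1 : ∀ θ1 ∈ Icc θl1 θu1, σ1 θ1 ∈ Icc (0:ℝ) rhat ∧ θ1 * D (σ1 θ1) = T)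
    (hσ2 : ∀ θ2 ∈ Icc θl2 θu2, σ2 θ2 ∈ Icc rhat rb ∧ θ2 * S (σ2 θ2) = T)
    (hmA : ∀ y ∈ Ioc (0:ℝ) rb, mA y ∈ Icc (0:ℝ) y ∧
      (∀ r ∈ Icc (0:ℝ) y, (y - r) * D r ≤ (y - mA y) * D (mA y)) ∧
      (∀ m ∈ Icc (0:ℝ) y,
        (∀ r ∈ Icc (0:ℝ) y, (y - r) * D r ≤ (y - m) * D m) → m = mA y))
    (hsA : ∀ x ∈ Ico (0:ℝ) rb, sA x ∈ Icc x rb ∧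
      (∀ r ∈ Icc x rb, (r - x) * S r ≤ (sA x - x) * S (sA x)) ∧
      (∀ m ∈ Icc x rb,
        (∀ r ∈ Icc x rb, (r - x) * S r ≤ (m - x) * S m) → m = sA x)) :
    (∀ θ1 ∈ Icc θl1 θu1,
      (∀ θ2 ∈ Icc θl2 θu2, σ1 θ1 ≤ mA (σ2 θ2)) →
      ∀ θ2 ∈ Icc θl2 θu2, ∀ x ∈ Icc (0:ℝ) (σ2 θ2),
        piMMt D S θ1 θ2 x (σ2 θ2) ≤ piMMt D S θ1 θ2 (σ1 θ1) (σ2 θ2)) ∧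
    (∀ θ2 ∈ Icc θl2 θu2,
      (∀ θ1 ∈ Icc θl1 θu1, sA (σ1 θ1) ≤ σ2 θ2) →
      ∀ θ1 ∈ Icc θl1 θu1, ∀ y ∈ Icc (σ1 θ1) rb,
        piRMt D S θ1 θ2 (σ1 θ1) y ≤ piRMt D S θ1 θ2 (σ1 θ1) (σ2 θ2)) := by
  refine ⟨fun θ1 hθ1m hcond θ2 hθ2m x hx => ?_, fun θ2 hθ2m hcond θ1 hθ1m y hy => ?_⟩
  · obtain ⟨-, hx₁⟩ := hσ1 θ1 hθ1m
    obtain ⟨hy, hSy⟩ := hσ2 θ2 hθ2m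
    obtain ⟨hm, hmax, -⟩ := hmA (σ2 θ2) ⟨hrhat.trans_le hy.1, hy.2⟩
    have hsub : Icc 0 (σ2 θ2) ⊆ Icc 0 rb := Icc_subset_Icc_right hy.2
    have hconc : ConcaveOn ℝ (Icc 0 (σ2 θ2)) (fun r => (σ2 θ2 - r) * D r) :=
      (concaveOn_affine_mul (α := -1) (β := σ2 θ2) hUo hD2 (convex_Icc _ _) (hsub.trans hU)
        (fun r hr => by linarith [hr.2]) (fun r hr => by linarith [hD' r (hsub hr)])
        (fun r hr => (hD'' r (hsub hr)).le)).congr fun r _ => by ring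
    exact piMMt_le_piMMt_of_targeting (hθ1.trans_le hθ1m.1) hT0.le hx₁ hSy
      (hDm.monotoneOn.mono hsub) hconc hm (isMaxOn_iff.2 hmax) (hcond θ2 hθ2m) hx
  · obtain ⟨hx, hDx⟩ := hσ1 θ1 hθ1m
    obtain ⟨-, hy₁⟩ := hσ2 θ2 hθ2m
    obtain ⟨hm, hmax, -⟩ := hsA (σ1 θ1) ⟨hx.1, hx.2.trans_lt hrb⟩
    have hsub : Icc (σ1 θ1) rb ⊆ Icc 0 rb := Icc_subset_Icc_left hx.1
    have hconc : ConcaveOn ℝ (Icc (σ1 θ1) rb) (fun r => (r - σ1 θ1) * S r) :=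
      (concaveOn_affine_mul (α := 1) (β := -σ1 θ1) hUo hS2 (convex_Icc _ _) (hsub.trans hU)
        (fun r hr => by linarith [hr.1]) (fun r hr => by linarith [hS' r (hsub hr)])
        (fun r hr => (hS'' r (hsub hr)).le)).congr fun r _ => by ring
    exact piRMt_le_piRMt_of_targeting (hθ2.trans_le hθ2m.1) hT0.le hDx hy₁ hx.1
      (hSa.antitoneOn.mono hsub) hconc hm (isMaxOn_iff.2 hmax) (hcond θ1 hθ1m) hy

/-- Dominant-response condition for volume targeting: if a type's targeted rate lies
weakly on the inventory-reducing side of every counterparty peak, the targeted rate is a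
best response against every counterparty type. -/
theorem dominant_response_volume_targeting
    (rhat rb Tmax : ℝ) (D S mA sA : ℝ → ℝ)
    (hrhat : 0 < rhat) (hrb : rhat < rb) (hTmax : 0 < Tmax)
    (hDc : ContinuousOn D (Icc 0 rb)) (hDm : StrictMonoOn D (Icc 0 rb))
    (hD0 : D 0 = 0) (hDr : D rhat = Tmax)
    (hSc : ContinuousOn S (Icc 0 rb)) (hSa : StrictAntiOn S (Icc 0 rb))
    (hSb : S rb = 0) (hSr : S rhat = Tmax)
    (U : Set ℝ) (hUo : IsOpen U) (hU : Icc (0:ℝ) rb ⊆ U)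
    (hD2 : ContDiffOn ℝ 2 D U) (hS2 : ContDiffOn ℝ 2 S U)
    (hD' : ∀ x ∈ Icc (0:ℝ) rb, 0 < deriv D x)
    (hD'' : ∀ x ∈ Icc (0:ℝ) rb, deriv (deriv D) x < 0)
    (hS' : ∀ x ∈ Icc (0:ℝ) rb, deriv S x < 0)
    (hS'' : ∀ x ∈ Icc (0:ℝ) rb, deriv (deriv S) x < 0)
    (θl1 θu1 θl2 θu2 : ℝ)
    (hθ1 : 0 < θl1) (hθ1' : θl1 ≤ θu1) (hθ2 : 0 < θl2) (hθ2' : θl2 ≤ θu2)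
    (T : ℝ) (hT0 : 0 < T) (hTle : T ≤ min (θl1 * Tmax) (θl2 * Tmax))
    (σ1 σ2 : ℝ → ℝ)
    (hσ1 : ∀ θ1 ∈ Icc θl1 θu1, σ1 θ1 ∈ Icc (0:ℝ) rhat ∧ θ1 * D (σ1 θ1) = T)
    (hσ2 : ∀ θ2 ∈ Icc θl2 θu2, σ2 θ2 ∈ Icc rhat rb ∧ θ2 * S (σ2 θ2) = T)
    (hmA : ∀ y ∈ Ioc (0:ℝ) rb, mA y ∈ Icc (0:ℝ) y ∧
      (∀ r ∈ Icc (0:ℝ) y, (y - r) * D r ≤ (y - mA y) * D (mA y)) ∧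
      (∀ m ∈ Icc (0:ℝ) y,
        (∀ r ∈ Icc (0:ℝ) y, (y - r) * D r ≤ (y - m) * D m) → m = mA y))
    (hsA : ∀ x ∈ Ico (0:ℝ) rb, sA x ∈ Icc x rb ∧
      (∀ r ∈ Icc x rb, (r - x) * S r ≤ (sA x - x) * S (sA x)) ∧
      (∀ m ∈ Icc x rb,
        (∀ r ∈ Icc x rb, (r - x) * S r ≤ (m - x) * S m) → m = sA x)) :
    (∀ θ1 ∈ Icc θl1 θu1,
      (∀ θ2 ∈ Icc θl2 θu2, σ1 θ1 ≤ mA (σ2 θ2)) →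
      ∀ θ2 ∈ Icc θl2 θu2, ∀ x ∈ Icc (0:ℝ) (σ2 θ2),
        piMMt D S θ1 θ2 x (σ2 θ2) ≤ piMMt D S θ1 θ2 (σ1 θ1) (σ2 θ2)) ∧
    (∀ θ2 ∈ Icc θl2 θu2,
      (∀ θ1 ∈ Icc θl1 θu1, sA (σ1 θ1) ≤ σ2 θ2) →
      ∀ θ1 ∈ Icc θl1 θu1, ∀ y ∈ Icc (σ1 θ1) rb,
        piRMt D S θ1 θ2 (σ1 θ1) y ≤ piRMt D S θ1 θ2 (σ1 θ1) (σ2 θ2)) :=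
  dominant_response_volume_targeting_general rhat rb D S mA sA hrhat hrb hDm hSa U hUo hU hD2 hS2
    hD' hD'' hS' hS'' θl1 θu1 θl2 θu2 hθ1 hθ2 T hT0 σ1 σ2 hσ1 hσ2 hmA hsA
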